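/- Let γ_min, γ_max > 0 and let B, B̃ ∈ ℝ^{m×r} satisfy γ_min·I ⪯ BᵀB ⪯ γ_max·I and γ_min·I ⪯ B̃ᵀB̃ ⪯ γ_max·I. Then the orthogonal projections onto the column spaces of B and B̃ satisfy ‖B(BᵀB)⁻¹Bᵀ − B̃(B̃ᵀB̃)⁻¹B̃ᵀ‖_F ≤ ( √γ_max/γ_min + 2·γ_max^{3/2}/γ_min² + 1/√γ_min ) · ‖B − B̃‖_F. -/

import Mathlib

/-!
Write `Δ = B - B̃`, `S = (BᵀB)⁻¹`, `S̃ = (B̃ᵀB̃)⁻¹`. Since `S - S̃ = S (B̃ᵀB̃ - BᵀB) S̃`, the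
difference `BSBᵀ - B̃S̃B̃ᵀ` is a sum of four products, each containing exactly one factor `Δ` or
`Δᵀ`. The Frobenius norm of such a product is at most `‖Δ‖_F` times the spectral norms of the
other factors, and the eigenvalue bounds give `‖B‖ ≤ √γmax`, `‖S‖ ≤ 1/γmin` and, by the
C⋆-identity `‖B̃S̃‖² = ‖S̃B̃ᵀB̃S̃‖ = ‖S̃‖`, also `‖B̃S̃‖ ≤ 1/√γmin`.
-/

open Matrix

/-- Frobenius norm of a real matrix. -/
noncomputable def frobNorm {m n : ℕ} (A : Matrix (Fin m) (Fin n) ℝ) : ℝ :=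
  Real.sqrt (∑ i, ∑ j, (A i j) ^ 2)

open WithLp

section Frobenius

open scoped Matrix.Norms.Frobenius

variable {m n : ℕ}

lemma frobNorm_eq_frobenius_norm (A : Matrix (Fin m) (Fin n) ℝ) : frobNorm A = ‖A‖ := by
  simp [frobNorm, frobenius_norm_def, Real.sqrt_eq_rpow]

lemma frobNorm_nonneg (A : Matrix (Fin m) (Fin n) ℝ) : 0 ≤ frobNorm A :=
  Real.sqrt_nonneg _

lemma frobNorm_add_le (A B : Matrix (Fin m) (Fin n) ℝ) :
    frobNorm (A + B) ≤ frobNorm A + frobNorm B := by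
  simp only [frobNorm_eq_frobenius_norm]
  exact norm_add_le A B

lemma frobNorm_sub_le (A B : Matrix (Fin m) (Fin n) ℝ) :
    frobNorm (A - B) ≤ frobNorm A + frobNorm B := by
  simp only [frobNorm_eq_frobenius_norm]
  exact norm_sub_le A B

lemma frobNorm_transpose (A : Matrix (Fin m) (Fin n) ℝ) : frobNorm Aᵀ = frobNorm A := by
  simp only [frobNorm_eq_frobenius_norm]
  exact frobenius_norm_transpose A

end Frobenius

open scoped Matrix.Norms.L2Operator

section L2OpNorm

variable {m n : Type*} [Fintype m] [Fintype n]

lemma norm_toLp_sq (v : n → ℝ) : ‖toLp 2 v‖ ^ 2 = v ⬝ᵥ v := by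
  simp [EuclideanSpace.real_norm_sq_eq (toLp 2 v), dotProduct, sq]

lemma dotProduct_le_norm_mul_norm (v w : n → ℝ) : v ⬝ᵥ w ≤ ‖toLp 2 v‖ * ‖toLp 2 w‖ := by
  simpa [EuclideanSpace.inner_toLp_toLp, dotProduct_comm] using
    real_inner_le_norm (toLp 2 v) (toLp 2 w)

lemma l2_opNorm_le_of_mulVec_le [DecidableEq n] {A : Matrix m n ℝ} {c : ℝ} (hc : 0 ≤ c)
    (h : ∀ v, ‖toLp 2 (A *ᵥ v)‖ ≤ c * ‖toLp 2 v‖) : ‖A‖ ≤ c :=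
  ContinuousLinearMap.opNorm_le_bound _ hc fun v => h v.ofLp

lemma l2_opNorm_transpose [DecidableEq m] [DecidableEq n] (A : Matrix m n ℝ) : ‖Aᵀ‖ = ‖A‖ := by
  rw [← conjTranspose_eq_transpose_of_trivial, l2_opNorm_conjTranspose]

end L2OpNorm

section FrobeniusL2

variable {a b c : ℕ}

lemma frobNorm_eq_sqrt_sum_norm_row_sq (A : Matrix (Fin a) (Fin b) ℝ) :
    frobNorm A = √(∑ i, ‖toLp 2 (A i)‖ ^ 2) := by
  simp [frobNorm, EuclideanSpace.real_norm_sq_eq]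

lemma frobNorm_mul_le (Y : Matrix (Fin a) (Fin b) ℝ) (X : Matrix (Fin b) (Fin c) ℝ) :
    frobNorm (Y * X) ≤ frobNorm Y * ‖X‖ := by
  have hrow (i : Fin a) : ‖toLp 2 ((Y * X) i)‖ ^ 2 ≤ ‖toLp 2 (Y i)‖ ^ 2 * ‖X‖ ^ 2 := by
    have h : ‖toLp 2 (Xᵀ *ᵥ Y i)‖ ≤ ‖Xᵀ‖ * ‖toLp 2 (Y i)‖ :=
      l2_opNorm_mulVec Xᵀ (toLp 2 (Y i))
    rw [mulVec_transpose, l2_opNorm_transpose] at h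
    rw [← mul_pow, mul_comm]
    exact pow_le_pow_left₀ (norm_nonneg _) h 2
  rw [frobNorm_eq_sqrt_sum_norm_row_sq, frobNorm_eq_sqrt_sum_norm_row_sq,
    ← Real.sqrt_sq (norm_nonneg X), ← Real.sqrt_mul (Finset.sum_nonneg fun i _ => sq_nonneg _),
    Finset.sum_mul]
  exact Real.sqrt_le_sqrt (Finset.sum_le_sum fun i _ => hrow i)

lemma mul_frobNorm_le (X : Matrix (Fin a) (Fin b) ℝ) (Y : Matrix (Fin b) (Fin c) ℝ) :
    frobNorm (X * Y) ≤ ‖X‖ * frobNorm Y := by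
  rw [← frobNorm_transpose, transpose_mul, ← frobNorm_transpose Y, ← l2_opNorm_transpose X,
    mul_comm]
  exact frobNorm_mul_le Yᵀ Xᵀ

lemma frobNorm_mul_mul_le {d : ℕ} (L : Matrix (Fin a) (Fin b) ℝ) (M : Matrix (Fin b) (Fin c) ℝ)
    (R : Matrix (Fin c) (Fin d) ℝ) : frobNorm (L * M * R) ≤ ‖L‖ * frobNorm M * ‖R‖ :=
  (frobNorm_mul_le _ R).trans <| by gcongr; exact mul_frobNorm_le L M

end FrobeniusL2

section Gram

variable {m n : Type*} [Fintype m] [Fintype n]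

lemma smul_dotProduct_le_of_posSemidef_sub [DecidableEq n] {M : Matrix n n ℝ} {γ : ℝ}
    (h : (M - γ • 1).PosSemidef) (v : n → ℝ) : γ * (v ⬝ᵥ v) ≤ v ⬝ᵥ (M *ᵥ v) := by
  have := h.dotProduct_mulVec_nonneg v
  simp only [star_trivial, sub_mulVec, smul_mulVec, one_mulVec, dotProduct_sub,
    dotProduct_smul, smul_eq_mul] at this
  linarith

lemma dotProduct_le_smul_of_posSemidef_sub [DecidableEq n] {M : Matrix n n ℝ} {γ : ℝ}
    (h : (γ • 1 - M).PosSemidef) (v : n → ℝ) : v ⬝ᵥ (M *ᵥ v) ≤ γ * (v ⬝ᵥ v) := by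
  have := h.dotProduct_mulVec_nonneg v
  simp only [star_trivial, sub_mulVec, smul_mulVec, one_mulVec, dotProduct_sub,
    dotProduct_smul, smul_eq_mul] at this
  linarith

lemma dotProduct_transpose_mul_self_mulVec (B : Matrix m n ℝ) (v : n → ℝ) :
    v ⬝ᵥ ((Bᵀ * B) *ᵥ v) = ‖toLp 2 (B *ᵥ v)‖ ^ 2 := by
  rw [norm_toLp_sq, ← mulVec_mulVec, dotProduct_mulVec, vecMul_transpose]

lemma l2_opNorm_le_sqrt_of_posSemidef [DecidableEq n] {B : Matrix m n ℝ} {γ : ℝ} (hγ : 0 ≤ γ)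
    (h : (γ • 1 - Bᵀ * B).PosSemidef) : ‖B‖ ≤ √γ := by
  refine l2_opNorm_le_of_mulVec_le (Real.sqrt_nonneg γ) fun v => ?_
  rw [← Real.sqrt_sq (norm_nonneg _), ← Real.sqrt_sq (norm_nonneg (toLp 2 v)),
    ← Real.sqrt_mul hγ]
  gcongr
  rw [← dotProduct_transpose_mul_self_mulVec, norm_toLp_sq]
  exact dotProduct_le_smul_of_posSemidef_sub h v

lemma isUnit_det_of_posSemidef_sub [DecidableEq n] {A : Matrix n n ℝ} {γ : ℝ} (hγ : 0 < γ)
    (h : (A - γ • 1).PosSemidef) : IsUnit A.det := by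
  have hA : A = (A - γ • 1) + γ • 1 := by abel
  rw [← isUnit_iff_isUnit_det, hA]
  exact (PosDef.posSemidef_add h (PosDef.one.smul hγ)).isUnit

lemma l2_opNorm_inv_le_of_posSemidef [DecidableEq n] {A : Matrix n n ℝ} {γ : ℝ} (hγ : 0 < γ)
    (h : (A - γ • 1).PosSemidef) : ‖A⁻¹‖ ≤ γ⁻¹ := by
  refine l2_opNorm_le_of_mulVec_le (inv_nonneg.2 hγ.le) fun u => ?_
  set w := A⁻¹ *ᵥ u
  have hAw : A *ᵥ w = u := by
    rw [mulVec_mulVec, mul_nonsing_inv A (isUnit_det_of_posSemidef_sub hγ h), one_mulVec]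
  have : ‖toLp 2 w‖ * (γ * ‖toLp 2 w‖) ≤ ‖toLp 2 w‖ * ‖toLp 2 u‖ :=
    calc ‖toLp 2 w‖ * (γ * ‖toLp 2 w‖) = γ * (w ⬝ᵥ w) := by rw [← norm_toLp_sq]; ring
      _ ≤ w ⬝ᵥ (A *ᵥ w) := smul_dotProduct_le_of_posSemidef_sub h w
      _ ≤ ‖toLp 2 w‖ * ‖toLp 2 u‖ := hAw ▸ dotProduct_le_norm_mul_norm w (A *ᵥ w)
  rw [le_inv_mul_iff₀ hγ]
  rcases (norm_nonneg (toLp 2 w)).eq_or_lt with hw | hw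
  · rw [← hw, mul_zero]; exact norm_nonneg _
  · exact le_of_mul_le_mul_left this hw

lemma l2_opNorm_mul_inv_le_of_posSemidef [DecidableEq m] [DecidableEq n] {B : Matrix m n ℝ}
    {γ : ℝ} (hγ : 0 < γ) (h : (Bᵀ * B - γ • 1).PosSemidef) : ‖B * (Bᵀ * B)⁻¹‖ ≤ (√γ)⁻¹ := by
  set S := (Bᵀ * B)⁻¹
  have hST : Sᵀ = S := by rw [transpose_nonsing_inv, transpose_mul, transpose_transpose]
  have hsq : ‖B * S‖ * ‖B * S‖ = ‖S‖ := by
    rw [← l2_opNorm_conjTranspose_mul_self, conjTranspose_eq_transpose_of_trivial,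
      transpose_mul, hST, Matrix.mul_assoc, ← Matrix.mul_assoc Bᵀ,
      mul_nonsing_inv _ (isUnit_det_of_posSemidef_sub hγ h), Matrix.mul_one]
  rw [← Real.sqrt_inv, ← Real.sqrt_mul_self (norm_nonneg (B * S)), hsq]
  exact Real.sqrt_le_sqrt (l2_opNorm_inv_le_of_posSemidef hγ h)

end Gram

lemma mul_mul_transpose_sub_mul_mul_transpose_eq {m n R : Type*} [Fintype m] [Fintype n]
    [DecidableEq n] [CommRing R]
    {B Bt : Matrix m n R} {S St : Matrix n n R} (hS : S * (Bᵀ * B) = 1)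
    (hSt : (Btᵀ * Bt) * St = 1) :
    B * S * Bᵀ - Bt * St * Btᵀ
      = (B - Bt) * (S * Bᵀ) - Bt * S * Btᵀ * (B - Bt) * (St * Bᵀ)
        - Bt * S * (B - Bt)ᵀ * (B * St * Bᵀ) + Bt * St * (B - Bt)ᵀ := by
  have hS' : Bt * S * (Btᵀ * Bt) * St * Bᵀ = Bt * S * Bᵀ := by
    rw [Matrix.mul_assoc (Bt * S), hSt, Matrix.mul_one]
  have hSt' : Bt * S * (Bᵀ * B) * St * Bᵀ = Bt * St * Bᵀ := by
    rw [Matrix.mul_assoc Bt S, hS, Matrix.mul_one]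
  calc B * S * Bᵀ - Bt * St * Btᵀ
      = B * S * Bᵀ - Bt * S * Bᵀ + Bt * S * (Btᵀ * Bt) * St * Bᵀ
          - Bt * S * (Bᵀ * B) * St * Bᵀ + Bt * St * Bᵀ - Bt * St * Btᵀ := by
        rw [hS', hSt']; abel
    _ = _ := by
        simp only [transpose_sub, Matrix.sub_mul, Matrix.mul_sub, Matrix.mul_assoc]
        abel

theorem frobNorm_mul_mul_transpose_sub_le {m r : ℕ} {B Bt : Matrix (Fin m) (Fin r) ℝ}
    {S St : Matrix (Fin r) (Fin r) ℝ} (hS : S * (Bᵀ * B) = 1) (hSt : (Btᵀ * Bt) * St = 1)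
    {β σ τ : ℝ} (hB : ‖B‖ ≤ β) (hBt : ‖Bt‖ ≤ β) (hSσ : ‖S‖ ≤ σ) (hStσ : ‖St‖ ≤ σ)
    (hBtSt : ‖Bt * St‖ ≤ τ) :
    frobNorm (B * S * Bᵀ - Bt * St * Btᵀ)
      ≤ (β * σ + 2 * β ^ 3 * σ ^ 2 + τ) * frobNorm (B - Bt) := by
  rw [mul_mul_transpose_sub_mul_mul_transpose_eq hS hSt]
  set Δ := B - Bt
  have hβ : 0 ≤ β := (norm_nonneg _).trans hB
  have hσ : 0 ≤ σ := (norm_nonneg _).trans hSσ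
  have hΔ := frobNorm_nonneg Δ
  have hSB : ‖S * Bᵀ‖ ≤ σ * β := by
    grw [l2_opNorm_mul, l2_opNorm_transpose, hSσ, hB]
  have hBtS : ‖Bt * S‖ ≤ β * σ := by grw [l2_opNorm_mul, hBt, hSσ]
  have hBtSBt : ‖Bt * S * Btᵀ‖ ≤ β * σ * β := by
    grw [l2_opNorm_mul, l2_opNorm_transpose, hBtS, hBt]
  have hBStB : ‖B * St * Bᵀ‖ ≤ β * σ * β := by
    grw [l2_opNorm_mul, l2_opNorm_transpose, l2_opNorm_mul, hB, hStσ, hB]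
  have hStB : ‖St * Bᵀ‖ ≤ σ * β := by
    grw [l2_opNorm_mul, l2_opNorm_transpose, hStσ, hB]
  calc _ ≤ frobNorm (Δ * (S * Bᵀ)) + frobNorm (Bt * S * Btᵀ * Δ * (St * Bᵀ))
          + frobNorm (Bt * S * Δᵀ * (B * St * Bᵀ)) + frobNorm (Bt * St * Δᵀ) := by
        grw [frobNorm_add_le, frobNorm_sub_le, frobNorm_sub_le]
    _ ≤ frobNorm Δ * (σ * β) + β * σ * β * frobNorm Δ * (σ * β)
          + β * σ * frobNorm Δ * (β * σ * β) + τ * frobNorm Δ := by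
        grw [frobNorm_mul_le, frobNorm_mul_mul_le, frobNorm_mul_mul_le, mul_frobNorm_le,
          frobNorm_transpose, hSB, hBtSBt, hStB, hBtS, hBStB, hBtSt]
    _ = _ := by ring

/-- Lipschitz continuity of the orthogonal projection onto the column space,
`B ↦ B(BᵀB)⁻¹Bᵀ`, under two-sided eigenvalue bounds on `BᵀB`. -/
theorem column_projection_lipschitz {m r : ℕ}
    (γmin γmax : ℝ) (hγmin : 0 < γmin) (hγmax : 0 < γmax)
    (B Bt : Matrix (Fin m) (Fin r) ℝ)
    (hB1 : (Bᵀ * B - γmin • (1 : Matrix (Fin r) (Fin r) ℝ)).PosSemidef)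
    (hB2 : (γmax • (1 : Matrix (Fin r) (Fin r) ℝ) - Bᵀ * B).PosSemidef)
    (hB1t : (Btᵀ * Bt - γmin • (1 : Matrix (Fin r) (Fin r) ℝ)).PosSemidef)
    (hB2t : (γmax • (1 : Matrix (Fin r) (Fin r) ℝ) - Btᵀ * Bt).PosSemidef) :
    frobNorm (B * (Bᵀ * B)⁻¹ * Bᵀ - Bt * (Btᵀ * Bt)⁻¹ * Btᵀ)
      ≤ (Real.sqrt γmax / γmin + 2 * γmax ^ ((3:ℝ)/2) / γmin ^ 2
          + 1 / Real.sqrt γmin) * frobNorm (B - Bt) := by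
  have hconst : √γmax / γmin + 2 * γmax ^ ((3:ℝ)/2) / γmin ^ 2 + 1 / √γmin
      = √γmax * γmin⁻¹ + 2 * √γmax ^ 3 * γmin⁻¹ ^ 2 + (√γmin)⁻¹ := by
    have h32 : γmax ^ ((3:ℝ)/2) = √γmax ^ 3 := by
      rw [Real.sqrt_eq_rpow, ← Real.rpow_mul_natCast hγmax.le]
      norm_num
    rw [h32]
    ring
  rw [hconst]
  exact frobNorm_mul_mul_transpose_sub_le
    (nonsing_inv_mul _ (isUnit_det_of_posSemidef_sub hγmin hB1))
    (mul_nonsing_inv _ (isUnit_det_of_posSemidef_sub hγmin hB1t))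
    (l2_opNorm_le_sqrt_of_posSemidef hγmax.le hB2)
    (l2_opNorm_le_sqrt_of_posSemidef hγmax.le hB2t)
    (l2_opNorm_inv_le_of_posSemidef hγmin hB1) (l2_opNorm_inv_le_of_posSemidef hγmin hB1t)
    (l2_opNorm_mul_inv_le_of_posSemidef hγmin hB1t)
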